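/- Let A, B be finite nonempty subsets of an abelian group and suppose 𝔄(A,B) = τ·|A+B| for some real τ ∈ [0,1]. Then |A|·|B| ≥ 2^{1−τ}·|A+B|. -/

import Mathlib

open scoped Pointwise

variable {G : Type*} [AddCommGroup G] [DecidableEq G]

def repCount (A B : Finset G) (x : G) : ℕ :=
  ((A ×ˢ B).filter fun ab => ab.1 + ab.2 = x).card

def uniqueRep (A B : Finset G) : ℕ :=
  ((A + B).filter fun x => repCount A B x = 1).card

def addEnergy' (A B : Finset G) : ℕ :=
  (((A ×ˢ A) ×ˢ B ×ˢ B).filter fun t => t.1.1 + t.2.1 = t.1.2 + t.2.2).card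

/-!
Every element of `A + B` has at least one representation, and all but the `𝔄(A,B) = τ|A+B|`
uniquely represented ones have at least two. Summing the representation counts gives
`|A||B| ≥ 2|A+B| - 𝔄(A,B) = (2 - τ)|A+B|`, and `2 ^ (1 - τ) ≤ 2 - τ` on `[0, 1]` by concavity
of `p ↦ 2 ^ p`.
-/

open Finset

theorem sum_repCount (A B : Finset G) :
    ∑ x ∈ A + B, repCount A B x = #A * #B := by
  rw [← card_product]
  exact (card_eq_sum_card_fiberwise fun ab hab ↦
    add_mem_add (mem_product.1 hab).1 (mem_product.1 hab).2).symm

theorem repCount_pos {A B : Finset G} {x : G} (hx : x ∈ A + B) : 0 < repCount A B x := by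
  obtain ⟨a, ha, b, hb, rfl⟩ := mem_add.1 hx
  exact card_pos.2 ⟨(a, b), mem_filter.2 ⟨mem_product.2 ⟨ha, hb⟩, rfl⟩⟩

theorem two_mul_card_add_le_card_mul_card_add_uniqueRep (A B : Finset G) :
    2 * #(A + B) ≤ #A * #B + uniqueRep A B := by
  rw [uniqueRep, card_filter, ← sum_repCount, ← sum_add_distrib, mul_comm, ← smul_eq_mul,
    ← sum_const]
  refine sum_le_sum fun x hx ↦ ?_
  have := repCount_pos hx
  split_ifs <;> omega

theorem two_rpow_one_sub_le {τ : ℝ} (hτ0 : 0 ≤ τ) (hτ1 : τ ≤ 1) : (2 : ℝ) ^ (1 - τ) ≤ 2 - τ := by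
  have h := rpow_one_add_le_one_add_mul_self (s := 1) (by norm_num) (sub_nonneg.2 hτ1)
    (sub_le_self 1 hτ0)
  rw [one_add_one_eq_two, mul_one] at h
  linarith

theorem stmt_10_general (A B : Finset G)
    (τ : ℝ) (hτ0 : 0 ≤ τ) (hτ1 : τ ≤ 1)
    (hτ : (uniqueRep A B : ℝ) = τ * (A + B).card) :
    (A.card : ℝ) * B.card ≥ (2 : ℝ) ^ (1 - τ) * (A + B).card := by
  have hcount : (2 : ℝ) * #(A + B) ≤ #A * #B + uniqueRep A B := by
    exact_mod_cast two_mul_card_add_le_card_mul_card_add_uniqueRep A B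
  calc (2 : ℝ) ^ (1 - τ) * #(A + B) ≤ (2 - τ) * #(A + B) := by
        gcongr
        exact two_rpow_one_sub_le hτ0 hτ1
    _ ≤ #A * #B := by linarith

theorem stmt_10 (A B : Finset G) (hA : A.Nonempty) (hB : B.Nonempty)
    (τ : ℝ) (hτ0 : 0 ≤ τ) (hτ1 : τ ≤ 1)
    (hτ : (uniqueRep A B : ℝ) = τ * (A + B).card) :
    (A.card : ℝ) * B.card ≥ (2 : ℝ) ^ (1 - τ) * (A + B).card :=
  stmt_10_general A B τ hτ0 hτ1 hτ
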